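/- Let R be a commutative ring, I ⊆ R an ideal, M an R-module, and P an R-module which is an I-contramodule. Then Hom_R(M, P) is an I-contramodule. -/

import Mathlib

universe u

open CategoryTheory

/-- An `R`-module `P` is an `I`-contramodule if, for every `s ∈ I`,
`Hom_R(R[s⁻¹], P) = 0 = Ext¹_R(R[s⁻¹], P)`, where `R[s⁻¹]` is the localization
of `R` at `{1, s, s², …}`. -/
def IsContramoduleModule (R : Type u) [CommRing R] (I : Ideal R) (P : Type u)
    [AddCommGroup P] [Module R P] : Prop :=
  ∀ s ∈ I,
    (∀ g : Localization.Away s →ₗ[R] P, g = 0) ∧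
    Subsingleton
      (((Ext R (ModuleCat.{u} R) 1).obj
          (Opposite.op (ModuleCat.of R (Localization.Away s)))).obj
        (ModuleCat.of R P))

/-!
Since `R[s⁻¹] ≅ R[X] ⧸ (sX - 1)` and `sX - 1` is a non-zero-divisor (its constant coefficient
is `-1`), the sequence `0 → R[X] → R[X] → R[s⁻¹] → 0`, the first map being multiplication by
`sX - 1`, is a projective resolution of length one. Computing `Hom` and `Ext¹` with it, `P`
satisfies both vanishing conditions at `s` exactly when precomposition with `sX - 1` is a
bijection of `Hom(R[X], P)`. Under `Hom(R[X], Hom(M, P)) ≅ Hom(M, Hom(R[X], P))` precomposition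
with `sX - 1` becomes postcomposition with that bijection, so the condition passes to `Hom(M, P)`.
-/

open Limits ZeroObject Polynomial

namespace CategoryTheory.ShortComplex

variable {C : Type*} [Category* C] [Abelian C]

/-- The complex `⋯ → 0 → S.X₁ → S.X₂` with `S.X₂` in degree `0`. -/
noncomputable def toChainComplex (S : ShortComplex C) : ChainComplex C ℕ :=
  ChainComplex.mk' S.X₂ S.X₁ S.f fun _ => ⟨0, 0, zero_comp⟩

lemma isZero_toChainComplex_X (S : ShortComplex C) (n : ℕ) :
    IsZero (S.toChainComplex.X (n + 2)) :=
  (isZero_zero C).of_iso (ChainComplex.mk'XIso _ _ _ _ n)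

lemma toChainComplex_d_one_zero (S : ShortComplex C) : S.toChainComplex.d 1 0 = S.f :=
  ChainComplex.mk'_d_1_0 ..

variable {S : ShortComplex C}

noncomputable def ShortExact.projectiveResolution (hS : S.ShortExact) [Projective S.X₁]
    [Projective S.X₂] : ProjectiveResolution S.X₃ where
  complex := S.toChainComplex
  projective
    | 0 => ‹Projective S.X₂›
    | 1 => ‹Projective S.X₁›
    | n + 2 => (S.isZero_toChainComplex_X n).projective
  π := (ChainComplex.toSingle₀Equiv _ _).symm
    ⟨S.g, by rw [toChainComplex_d_one_zero]; exact S.zero⟩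
  quasiIso := ⟨fun
    | 0 => by
      rw [ChainComplex.quasiIsoAt₀_iff, ShortComplex.quasiIso_iff_of_zeros' _ rfl rfl rfl]
      refine (ShortComplex.exact_and_epi_g_iff_of_iso ?_).2 ⟨hS.exact, hS.epi_g⟩
      refine ShortComplex.isoMk (Iso.refl _) (Iso.refl _) (Iso.refl _) ?_ ?_
      · erw [Category.id_comp, Category.comp_id]
        exact S.toChainComplex_d_one_zero.symm
      · erw [Category.id_comp, Category.comp_id]
        exact (ChainComplex.toSingle₀Equiv_symm_apply_f_zero (C := S.toChainComplex) S.g _).symm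
    | 1 => by
      rw [quasiIsoAt_iff_exactAt' _ _ (ChainComplex.exactAt_succ_single_obj _ _),
        HomologicalComplex.exactAt_iff' _ 2 1 0 (by simp) (by simp),
        ShortComplex.exact_iff_mono _
          ((S.isZero_toChainComplex_X 0).eq_of_src (S.toChainComplex.d 2 1) 0)]
      simp only [HomologicalComplex.shortComplexFunctor'_obj_g, toChainComplex_d_one_zero]
      exact hS.mono_f
    | n + 2 => by
      rw [quasiIsoAt_iff_exactAt' _ _ (ChainComplex.exactAt_succ_single_obj _ _),
        HomologicalComplex.exactAt_iff' _ (n + 3) (n + 2) (n + 1) (by simp) (by simp)]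
      exact ShortComplex.exact_of_isZero_X₂ _ (S.isZero_toChainComplex_X n)⟩

lemma ShortExact.subsingleton_ext_one_iff {R : Type*} [Ring R] [Linear R C]
    [EnoughProjectives C] (hS : S.ShortExact) [Projective S.X₁] [Projective S.X₂] (Y : C) :
    Subsingleton (((Ext R C 1).obj (Opposite.op S.X₃)).obj Y) ↔
      ∀ g : S.X₁ ⟶ Y, ∃ h : S.X₂ ⟶ Y, S.f ≫ h = g := by
  rw [← ModuleCat.isZero_iff_subsingleton,
    Iso.isZero_iff (hS.projectiveResolution.isoExt 1 Y),
    ← HomologicalComplex.exactAt_iff_isZero_homology,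
    HomologicalComplex.exactAt_iff' _ 0 1 2 (by simp) (by simp),
    ShortComplex.exact_iff_epi _ (IsZero.eq_of_tgt ?_ _ _), ModuleCat.epi_iff_surjective]
  · change Function.Surjective
        (fun h : S.toChainComplex.X 0 ⟶ Y => S.toChainComplex.d 1 0 ≫ h) ↔ _
    rw [toChainComplex_d_one_zero]
    rfl
  · have : Subsingleton (S.toChainComplex.X 2 ⟶ Y) :=
      ⟨(S.isZero_toChainComplex_X 0).eq_of_src⟩
    exact ModuleCat.isZero_of_subsingleton (ModuleCat.of R (S.toChainComplex.X 2 ⟶ Y))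

end CategoryTheory.ShortComplex

section LinearAlgebra

variable {R : Type*} [CommRing R] {M₁ M₂ M₃ N : Type*}
  [AddCommGroup M₁] [Module R M₁] [AddCommGroup M₂] [Module R M₂]
  [AddCommGroup M₃] [Module R M₃] [AddCommGroup N] [Module R N]

theorem Function.Exact.injective_lcomp_iff {f : M₁ →ₗ[R] M₂} {g : M₂ →ₗ[R] M₃}
    (hexact : Function.Exact f g) (surj : Function.Surjective g) :
    Function.Injective (LinearMap.lcomp R N f) ↔ ∀ h : M₃ →ₗ[R] N, h = 0 := by
  refine ⟨fun inj h => ?_, fun hzero => ?_⟩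
  · refine surj.injective_linearMapComp_right (inj ?_)
    rw [LinearMap.lcomp_apply', LinearMap.lcomp_apply', LinearMap.comp_assoc,
      hexact.linearMap_comp_eq_zero]
    simp
  · rw [← LinearMap.ker_eq_bot, LinearMap.ker_eq_bot']
    intro φ hφ
    obtain ⟨h, rfl⟩ := (LinearMap.exact_lcomp_of_exact_of_surjective N hexact surj φ).1 hφ
    rw [hzero h]
    rfl

theorem LinearMap.bijective_lcomp_linearMap {f : M₁ →ₗ[R] M₂}
    (hf : Function.Bijective (LinearMap.lcomp R N f)) (M : Type*) [AddCommGroup M] [Module R M] :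
    Function.Bijective (LinearMap.lcomp R (M →ₗ[R] N) f) := by
  let e := LinearEquiv.ofBijective (LinearMap.lcomp R N f) hf
  have : ⇑(LinearMap.lcomp R (M →ₗ[R] N) f) =
      ⇑((LinearMap.lflip (R₀ := R)).trans ((LinearEquiv.congrRight e).trans LinearMap.lflip)) :=
    rfl
  rw [this]
  exact LinearEquiv.bijective _

end LinearAlgebra

section ProjectivePresentation

variable {R : Type u} [CommRing R] {F₁ F₀ A : Type u}
  [AddCommGroup F₁] [Module R F₁] [Module.Projective R F₁]
  [AddCommGroup F₀] [Module R F₀] [Module.Projective R F₀] [AddCommGroup A] [Module R A]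
  {d : F₁ →ₗ[R] F₀} {π : F₀ →ₗ[R] A}

theorem subsingleton_ext_one_iff_surjective_lcomp (hd : Function.Injective d)
    (hexact : Function.Exact d π) (hπ : Function.Surjective π) (Y : Type u) [AddCommGroup Y]
    [Module R Y] :
    Subsingleton (((Ext R (ModuleCat.{u} R) 1).obj
        (Opposite.op (ModuleCat.of R A))).obj (ModuleCat.of R Y)) ↔
      Function.Surjective (LinearMap.lcomp R Y d) := by
  let S := ShortComplex.mk (ModuleCat.ofHom d) (ModuleCat.ofHom π)
    (ModuleCat.hom_ext hexact.linearMap_comp_eq_zero)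
  rw [(ModuleCat.shortComplex_shortExact S hexact hd hπ).subsingleton_ext_one_iff]
  refine ⟨fun H g => ?_, fun H g => ?_⟩
  · obtain ⟨h, hh⟩ := H (ModuleCat.ofHom g)
    exact ⟨h.hom, congrArg ModuleCat.Hom.hom hh⟩
  · obtain ⟨h, hh⟩ := H g.hom
    exact ⟨ModuleCat.ofHom h, ModuleCat.hom_ext hh⟩

theorem hom_eq_zero_and_subsingleton_ext_one_iff_bijective_lcomp (hd : Function.Injective d)
    (hexact : Function.Exact d π) (hπ : Function.Surjective π) (P : Type u) [AddCommGroup P]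
    [Module R P] :
    ((∀ g : A →ₗ[R] P, g = 0) ∧ Subsingleton (((Ext R (ModuleCat.{u} R) 1).obj
        (Opposite.op (ModuleCat.of R A))).obj (ModuleCat.of R P))) ↔
      Function.Bijective (LinearMap.lcomp R P d) := by
  rw [subsingleton_ext_one_iff_surjective_lcomp hd hexact hπ, ← hexact.injective_lcomp_iff hπ]
  rfl

end ProjectivePresentation

namespace Localization.Away

variable {R : Type*} [CommRing R] (s : R)

theorem injective_mulLeft_C_mul_X_sub_one :
    Function.Injective (LinearMap.mulLeft R (C s * X - 1 : R[X])) :=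
  (injective_iff_map_eq_zero _).2
    (mem_nonzeroDivisors_of_coeff_mem 0 (by simpa using isUnit_one.neg.mem_nonZeroDivisors)).1

/-- The surjection `R[X] → R[s⁻¹]`, `X ↦ s⁻¹`. -/
noncomputable def ofPolynomial : R[X] →ₗ[R] Localization.Away s :=
  ((Localization.awayEquivAdjoin s).symm.toAlgHom.comp (AdjoinRoot.mkₐ _)).toLinearMap

theorem surjective_ofPolynomial : Function.Surjective (ofPolynomial s) :=
  (Localization.awayEquivAdjoin s).symm.surjective.comp AdjoinRoot.mk_surjective

theorem exact_mulLeft_ofPolynomial :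
    Function.Exact (LinearMap.mulLeft R (C s * X - 1 : R[X])) (ofPolynomial s) := by
  intro p
  simp [ofPolynomial, AdjoinRoot.mk_eq_zero, dvd_def, @eq_comm _ p]

end Localization.Away

theorem isContramoduleModule_iff (R : Type u) [CommRing R] (I : Ideal R) (P : Type u)
    [AddCommGroup P] [Module R P] :
    IsContramoduleModule R I P ↔
      ∀ s ∈ I, Function.Bijective (LinearMap.lcomp R P (LinearMap.mulLeft R (C s * X - 1))) :=
  forall₂_congr fun s _ => hom_eq_zero_and_subsingleton_ext_one_iff_bijective_lcomp
    (Localization.Away.injective_mulLeft_C_mul_X_sub_one s)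
    (Localization.Away.exact_mulLeft_ofPolynomial s) (Localization.Away.surjective_ofPolynomial s) P

/-- Let `R` be a commutative ring, `I ⊆ R` an ideal, `M` an `R`-module and `P` an
`R`-module which is an `I`-contramodule.  Then `Hom_R(M, P)` is an
`I`-contramodule. -/
theorem hom_into_contramodule_is_contramodule
    (R : Type u) [CommRing R] (I : Ideal R) (M P : Type u)
    [AddCommGroup M] [Module R M] [AddCommGroup P] [Module R P]
    (hP : IsContramoduleModule R I P) :
    IsContramoduleModule R I (M →ₗ[R] P) := by
  rw [isContramoduleModule_iff] at hP ⊢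
  exact fun s hs => LinearMap.bijective_lcomp_linearMap (hP s hs) M
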